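/- arXiv:1409.1329 — 2 statements merged into one kernel-verified Lean document; each statement's English description precedes it below -/
import Mathlib

section
/- Let (A, α) be a rank-one unital Kreĭn C*-algebra with fundamental symmetry α, i.e. dim_ℂ A₊ = dim_ℂ A₋ = 1. Then A₊ = ℂ·1, and there exists e ∈ A₋ with ‖e‖ = 1, e·e = 1 and e* = −e, such that the map 𝕂 → A sending T_{m,n} ↦ m·1 + n·e (m, n ∈ ℂ) is a bijective unital ℂ-algebra homomorphism that preserves the involutions and is isometric. Hence every rank-one unital Kreĭn C*-algebra is isomorphic to 𝕂. -/
noncomputable section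

open scoped Matrix.Norms.L2Operator

/-- Membership in the Kreĭn C*-algebra `𝕂` of matrices `T_{a,b} = !![a, b; b, a]`. -/
def Kmem (M : Matrix (Fin 2) (Fin 2) ℂ) : Prop :=
  M 0 0 = M 1 1 ∧ M 0 1 = M 1 0

/-- The matrix `T_{a,b} = !![a, b; b, a]`. -/
def Tmat (a b : ℂ) : Matrix (Fin 2) (Fin 2) ℂ := !![a, b; b, a]

/-- The involution of `𝕂`: `T_{a,b}* = T_{conj a, -conj b}`. -/
noncomputable def Kst (M : Matrix (Fin 2) (Fin 2) ℂ) : Matrix (Fin 2) (Fin 2) ℂ :=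
  Matrix.of fun i j => if i = j then starRingEnd ℂ (M i j) else -starRingEnd ℂ (M i j)

/-- The fundamental symmetry of `𝕂`: `γ (T_{a,b}) = T_{a,-b}`. -/
def Kgamma (M : Matrix (Fin 2) (Fin 2) ℂ) : Matrix (Fin 2) (Fin 2) ℂ :=
  Matrix.of fun i j => if i = j then M i j else -M i j

/-- The odd symmetry of `𝕂`: `ε (T_{a,b}) = T_{b,a}`. -/
def Keps (M : Matrix (Fin 2) (Fin 2) ℂ) : Matrix (Fin 2) (Fin 2) ℂ :=
  Matrix.of fun i j => M i (j + 1)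

/-!
The map `x ↦ α (star x)` is a second involution of `A`, for which the hypothesis on `α` is the
C*-identity. Squares of elements of `A₋` lie in `A₊ = ℂ·1`, so a rescaled generator `e` of `A₋`
satisfies `e * e = 1`; `star e` lies in `A₋` as well, and `star e = e` is excluded because it
would make `(1 - e) * (1 + e) = 0` have norm `‖1 + e‖ ^ 2`. Then `P = (1 + e) / 2` and
`Q = (1 - e) / 2` are complementary projections fixed by `x ↦ α (star x)`, and the C*-identity
gives `‖s • P + t • Q‖ = max ‖s‖ ‖t‖`. Since `m • 1 + n • e = (m + n) • P + (m - n) • Q` and the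
unitary Hadamard matrix diagonalises `T_{m,n}` with eigenvalues `m ± n`, the map is isometric.
-/

lemma norm_vec_fin_two {E : Type*} [SeminormedAddCommGroup E] (x y : E) :
    ‖(![x, y] : Fin 2 → E)‖ = max ‖x‖ ‖y‖ := by
  refine le_antisymm ((pi_norm_le_iff_of_nonneg (by positivity)).2 fun i => ?_)
    (max_le (norm_le_pi_norm (![x, y] : Fin 2 → E) 0) (norm_le_pi_norm (![x, y] : Fin 2 → E) 1))
  fin_cases i
  exacts [le_max_left _ _, le_max_right _ _]

def hadamard2 : Matrix (Fin 2) (Fin 2) ℂ := ((Real.sqrt 2 : ℂ))⁻¹ • !![1, 1; 1, -1]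

lemma inv_sqrt_two_mul_self : ((Real.sqrt 2 : ℂ))⁻¹ * ((Real.sqrt 2 : ℂ))⁻¹ = 2⁻¹ := by
  rw [← mul_inv, ← Complex.ofReal_mul, Real.mul_self_sqrt zero_le_two]
  push_cast; rfl

lemma hadamard2_mul_self : hadamard2 * hadamard2 = 1 := by
  rw [hadamard2, smul_mul_smul_comm, inv_sqrt_two_mul_self, Matrix.mul_fin_two, Matrix.one_fin_two]
  ext i j; fin_cases i <;> fin_cases j <;> norm_num

lemma hadamard2_mem_unitary : hadamard2 ∈ unitary (Matrix (Fin 2) (Fin 2) ℂ) := by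
  have hstar : star hadamard2 = hadamard2 := by
    ext i j; fin_cases i <;> fin_cases j <;> simp [hadamard2]
  exact ⟨by rw [hstar, hadamard2_mul_self], by rw [hstar, hadamard2_mul_self]⟩

lemma Tmat_eq_hadamard2_mul_diagonal_mul (a b : ℂ) :
    Tmat a b = hadamard2 * Matrix.diagonal ![a + b, a - b] * hadamard2 := by
  rw [hadamard2, smul_mul_assoc, mul_smul_comm, smul_mul_assoc, smul_smul, inv_sqrt_two_mul_self,
    Matrix.diagonal_fin_two, Matrix.mul_fin_two, Matrix.mul_fin_two, Tmat]
  ext i j; fin_cases i <;> fin_cases j <;> simp <;> ring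

lemma norm_Tmat (a b : ℂ) : ‖Tmat a b‖ = max ‖a + b‖ ‖a - b‖ := by
  rw [Tmat_eq_hadamard2_mul_diagonal_mul, CStarRing.norm_mul_mem_unitary _ hadamard2_mem_unitary,
    CStarRing.norm_mem_unitary_mul _ hadamard2_mem_unitary, Matrix.l2_opNorm_diagonal,
    norm_vec_fin_two]

lemma Kmem_Tmat (a b : ℂ) : Kmem (Tmat a b) := ⟨rfl, rfl⟩

lemma Kmem.eq_Tmat {M : Matrix (Fin 2) (Fin 2) ℂ} (hM : Kmem M) : M = Tmat (M 0 0) (M 0 1) := by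
  ext i j; fin_cases i <;> fin_cases j
  exacts [rfl, rfl, hM.2.symm, hM.1.symm]

lemma Kmem.sub {M N : Matrix (Fin 2) (Fin 2) ℂ} (hM : Kmem M) (hN : Kmem N) : Kmem (M - N) :=
  ⟨by simp [hM.1, hN.1], by simp [hM.2, hN.2]⟩

lemma exists_eq_smul_of_exists_eq_smul {K V : Type*} [Field K] [AddCommGroup V] [Module K V]
    {p v x : V} (hv : ∃ c : K, v = c • p) (hv0 : v ≠ 0) (hx : ∃ c : K, x = c • p) :
    ∃ c : K, x = c • v := by
  obtain ⟨a, rfl⟩ := hv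
  obtain ⟨b, rfl⟩ := hx
  have ha : a ≠ 0 := by rintro rfl; exact hv0 (zero_smul K p)
  exact ⟨b / a, by rw [smul_smul, div_mul_cancel₀ b ha]⟩

section Algebra

variable {A : Type*} [Ring A] [Algebra ℂ A]

lemma exists_map_eq_self_add_map_eq_neg {σ : A →ₐ[ℂ] A} (hσ : Function.Involutive σ) (y : A) :
    ∃ a b : A, σ a = a ∧ σ b = -b ∧ a + b = y := by
  refine ⟨(2⁻¹ : ℂ) • (y + σ y), (2⁻¹ : ℂ) • (y - σ y), ?_, ?_, ?_⟩
  · rw [map_smul, map_add, hσ y, add_comm]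
  · rw [map_smul, map_sub, hσ y, ← smul_neg, neg_sub]
  · module

lemma ne_algebraMap_of_map_eq_neg {σ : A →ₐ[ℂ] A} {e : A} (he : σ e = -e) (he0 : e ≠ 0)
    (c : ℂ) : e ≠ algebraMap ℂ A c := by
  rintro rfl
  rw [AlgHom.commutes, eq_neg_iff_add_eq_zero, ← two_smul ℂ, smul_eq_zero] at he
  exact he.elim two_ne_zero he0

lemma exists_smul_mul_self_eq_one {q : A} {l : ℂ} (hl : l ≠ 0) (hq : q * q = l • 1) :
    ∃ c : ℂ, c • q * (c • q) = 1 := by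
  obtain ⟨c, hc⟩ := IsAlgClosed.exists_pow_nat_eq l⁻¹ two_pos
  exact ⟨c, by rw [smul_mul_smul_comm, hq, smul_smul, ← sq, hc, inv_mul_cancel₀ hl, one_smul]⟩

lemma smul_one_add_smul_mul_smul_one_add_smul {e : A} (hee : e * e = 1) (a b c d : ℂ) :
    (a • 1 + b • e) * (c • 1 + d • e) = (a * c + b * d) • 1 + (a * d + b * c) • e := by
  simp only [add_mul, mul_add, smul_mul_smul_comm, one_mul, mul_one, hee, add_smul]
  abel

def kreinMap (e : A) : Matrix (Fin 2) (Fin 2) ℂ →ₗ[ℂ] A where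
  toFun M := M 0 0 • 1 + M 0 1 • e
  map_add' M N := by simp only [Matrix.add_apply, add_smul]; abel
  map_smul' c M := by simp only [Matrix.smul_apply, smul_eq_mul, mul_smul, smul_add,
    RingHom.id_apply]

lemma kreinMap_apply (e : A) (M : Matrix (Fin 2) (Fin 2) ℂ) :
    kreinMap e M = M 0 0 • 1 + M 0 1 • e := rfl

lemma kreinMap_one (e : A) : kreinMap e 1 = 1 := by simp [kreinMap_apply]

lemma kreinMap_mul {e : A} (hee : e * e = 1) (M : Matrix (Fin 2) (Fin 2) ℂ)
    {N : Matrix (Fin 2) (Fin 2) ℂ} (hN : Kmem N) :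
    kreinMap e (M * N) = kreinMap e M * kreinMap e N := by
  rw [kreinMap_apply, kreinMap_apply, kreinMap_apply, smul_one_add_smul_mul_smul_one_add_smul hee,
    Matrix.mul_apply, Matrix.mul_apply, Fin.sum_univ_two, Fin.sum_univ_two, ← hN.1, ← hN.2]

lemma kreinMap_Kst [StarRing A] [StarModule ℂ A] {e : A} (he : star e = -e)
    (M : Matrix (Fin 2) (Fin 2) ℂ) : kreinMap e (Kst M) = star (kreinMap e M) := by
  simp [kreinMap_apply, Kst, star_smul, he]

lemma exists_kmem_kreinMap_eq {σ : A →ₐ[ℂ] A} (hσ : Function.Involutive σ)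
    (heven : ∀ x, σ x = x → ∃ c : ℂ, x = c • 1) {e : A}
    (hodd : ∀ x, σ x = -x → ∃ c : ℂ, x = c • e) (y : A) : ∃ M, Kmem M ∧ kreinMap e M = y := by
  obtain ⟨a, b, ha, hb, rfl⟩ := exists_map_eq_self_add_map_eq_neg hσ y
  obtain ⟨m, rfl⟩ := heven a ha
  obtain ⟨n, rfl⟩ := hodd b hb
  exact ⟨Tmat m n, Kmem_Tmat m n, rfl⟩

end Algebra

section Normed

variable {A : Type*} [NormedRing A] [NormedAlgebra ℂ A]

lemma kreinMap_injOn {e : A} (hiso : ∀ M, Kmem M → ‖kreinMap e M‖ = ‖M‖)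
    {M N : Matrix (Fin 2) (Fin 2) ℂ} (hM : Kmem M) (hN : Kmem N)
    (h : kreinMap e M = kreinMap e N) : M = N := by
  have hMN := hiso _ (hM.sub hN)
  rw [map_sub, h, sub_self, norm_zero, eq_comm, norm_eq_zero, sub_eq_zero] at hMN
  exact hMN

lemma norm_ofReal_smul_add_ofReal_smul_le {P Q : A} (hsum : P + Q = 1) (h1 : ‖(1 : A)‖ ≤ 1)
    (hP : ‖P‖ ≤ 1) (hQ : ‖Q‖ ≤ 1) {a b : ℝ} (ha : 0 ≤ a) (hb : 0 ≤ b) :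
    ‖(a : ℂ) • P + (b : ℂ) • Q‖ ≤ max a b := by
  wlog hba : b ≤ a generalizing P Q a b
  · rw [add_comm, max_comm]
    exact this (by rwa [add_comm]) hQ hP hb ha (le_of_not_ge hba)
  have hsplit : (a : ℂ) • P + (b : ℂ) • Q = (b : ℂ) • 1 + ((a - b : ℝ) : ℂ) • P := by
    rw [← hsum]; push_cast; module
  calc ‖(a : ℂ) • P + (b : ℂ) • Q‖ ≤ b * ‖(1 : A)‖ + (a - b) * ‖P‖ := by
        rw [hsplit]
        refine (norm_add_le _ _).trans_eq ?_
        rw [norm_smul, norm_smul, Complex.norm_real, Complex.norm_real, Real.norm_of_nonneg hb,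
          Real.norm_of_nonneg (sub_nonneg.2 hba)]
    _ ≤ b * 1 + (a - b) * 1 := by gcongr
    _ = max a b := by rw [max_eq_left hba]; ring

variable [StarRing A] {σ : A →ₐ[ℂ] A}

lemma norm_eq_one_of_isIdempotentElem (hfs : ∀ x, ‖σ (star x) * x‖ = ‖x‖ ^ 2) {P : A}
    (hP : σ (star P) = P) (hPP : IsIdempotentElem P) (hP0 : P ≠ 0) : ‖P‖ = 1 := by
  have h := hfs P
  rw [hP, hPP.eq, sq] at h
  exact (mul_eq_left₀ (norm_ne_zero_iff.2 hP0)).1 h.symm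

lemma mul_self_ne_zero_of_map_eq_neg (hstar : ∀ x, σ (star x) = star (σ x))
    (hfs : ∀ x, ‖σ (star x) * x‖ = ‖x‖ ^ 2) {q : A} (hq : σ q = -q) (hq0 : q ≠ 0)
    (hodd : ∀ x, σ x = -x → ∃ c : ℂ, x = c • q) : q * q ≠ 0 := by
  intro hqq
  obtain ⟨μ, hμ⟩ := hodd (star q) (by rw [hstar, hq, star_neg])
  have h := hfs q
  rw [hμ, map_smul, hq, smul_neg, neg_mul, smul_mul_assoc, hqq, smul_zero, neg_zero, norm_zero,
    eq_comm, pow_eq_zero_iff two_ne_zero, norm_eq_zero] at h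
  exact hq0 h

lemma exists_mul_self_eq_one_of_map_eq_neg (hstar : ∀ x, σ (star x) = star (σ x))
    (hfs : ∀ x, ‖σ (star x) * x‖ = ‖x‖ ^ 2) (heven : ∀ x, σ x = x → ∃ c : ℂ, x = c • 1)
    {q : A} (hq : σ q = -q) (hq0 : q ≠ 0) (hodd : ∀ x, σ x = -x → ∃ c : ℂ, x = c • q) :
    ∃ e : A, σ e = -e ∧ e * e = 1 ∧ ∀ x, σ x = -x → ∃ c : ℂ, x = c • e := by
  have : Nontrivial A := nontrivial_of_ne q 0 hq0
  obtain ⟨l, hl⟩ := heven (q * q) (by rw [map_mul, hq, neg_mul_neg])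
  have hl0 : l ≠ 0 := by
    rintro rfl
    exact mul_self_ne_zero_of_map_eq_neg hstar hfs hq hq0 hodd (by rw [hl, zero_smul])
  obtain ⟨c, hc⟩ := exists_smul_mul_self_eq_one hl0 hl
  have he0 : c • q ≠ 0 := by
    intro h
    rw [h, zero_mul] at hc
    exact zero_ne_one hc
  refine ⟨c • q, by rw [map_smul, hq, smul_neg], hc, fun x hx => ?_⟩
  exact exists_eq_smul_of_exists_eq_smul (hodd _ (by rw [map_smul, hq, smul_neg])) he0 (hodd x hx)

lemma star_eq_neg_of_map_eq_neg [StarModule ℂ A] (hstar : ∀ x, σ (star x) = star (σ x))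
    (hfs : ∀ x, ‖σ (star x) * x‖ = ‖x‖ ^ 2) {e : A} (he : σ e = -e) (hee : e * e = 1)
    (hodd : ∀ x, σ x = -x → ∃ c : ℂ, x = c • e) : star e = -e := by
  rcases subsingleton_or_nontrivial A with _ | _
  · exact Subsingleton.elim _ _
  obtain ⟨ν, hν⟩ := hodd (star e) (by rw [hstar, he, star_neg])
  have hν2 : ν * ν = 1 := by
    have h := congrArg star hee
    rw [star_mul, star_one, hν, smul_mul_smul_comm, hee] at h
    exact smul_left_injective ℂ one_ne_zero (h.trans (one_smul ℂ 1).symm)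
  have he0 : e ≠ 0 := by rintro rfl; simp at hee
  rcases mul_self_eq_one_iff.1 hν2 with rfl | rfl
  · rw [one_smul] at hν
    have hzero : σ (star (1 + e)) * (1 + e) = 0 := by
      rw [star_add, star_one, hν, map_add, map_one, he, ← sub_eq_add_neg, sub_mul, one_mul,
        mul_add, mul_one, hee, add_comm e, sub_self]
    have h := hfs (1 + e)
    rw [hzero, norm_zero, eq_comm, pow_eq_zero_iff two_ne_zero, norm_eq_zero,
      add_eq_zero_iff_neg_eq'] at h
    exact (ne_algebraMap_of_map_eq_neg he he0 (-1)
      (by rw [map_neg, map_one]; exact neg_eq_iff_eq_neg.1 h)).elim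
  · rwa [neg_one_smul] at hν

lemma norm_smul_add_smul_eq_max [StarModule ℂ A] (hfs : ∀ x, ‖σ (star x) * x‖ = ‖x‖ ^ 2)
    {P Q : A} (hsum : P + Q = 1) (hPQ : P * Q = 0) (hP : σ (star P) = P) (hQ : σ (star Q) = Q)
    (hP0 : P ≠ 0) (hQ0 : Q ≠ 0) (s t : ℂ) : ‖s • P + t • Q‖ = max ‖s‖ ‖t‖ := by
  have : Nontrivial A := nontrivial_of_ne P 0 hP0
  obtain rfl : Q = 1 - P := eq_sub_of_add_eq' hsum
  have hPP : IsIdempotentElem P := by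
    rwa [mul_sub, mul_one, sub_eq_zero, eq_comm] at hPQ
  have hQP : (1 - P) * P = 0 := by rw [sub_mul, one_mul, hPP.eq, sub_self]
  have hnP := norm_eq_one_of_isIdempotentElem hfs hP hPP hP0
  have hnQ := norm_eq_one_of_isIdempotentElem hfs hQ hPP.one_sub hQ0
  have hn1 := norm_eq_one_of_isIdempotentElem hfs (by rw [star_one, map_one]) .one one_ne_zero
  set x := s • P + t • (1 - P)
  have hcoeff : ∀ (R : A) (r : ℂ), ‖R‖ = 1 → x * R = r • R → ‖r‖ ≤ ‖x‖ := fun R r hR hxR => by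
    simpa [hxR, norm_smul, hR] using norm_mul_le x R
  have hsharp : σ (star x) * x = ((‖s‖ ^ 2 : ℝ) : ℂ) • P + ((‖t‖ ^ 2 : ℝ) : ℂ) • (1 - P) := by
    simp only [x, star_add, star_smul, map_add, map_smul, hP, hQ, add_mul, mul_add,
      smul_mul_smul_comm, hPP.eq, hPQ, hQP, hPP.one_sub.eq, smul_zero, add_zero, zero_add,
      Complex.ofReal_pow, ← Complex.conj_mul']
    rfl
  refine le_antisymm ?_ (max_le (hcoeff P s hnP ?_) (hcoeff (1 - P) t hnQ ?_))
  · refine (pow_le_pow_iff_left₀ (norm_nonneg x) (by positivity) two_ne_zero).1 ?_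
    rw [← hfs, hsharp]
    refine (norm_ofReal_smul_add_ofReal_smul_le hsum hn1.le hnP.le hnQ.le (by positivity)
      (by positivity)).trans (max_le ?_ ?_)
    · exact pow_le_pow_left₀ (norm_nonneg s) (le_max_left _ _) 2
    · exact pow_le_pow_left₀ (norm_nonneg t) (le_max_right _ _) 2
  · simp only [x, add_mul, smul_mul_assoc, hPP.eq, hQP, smul_zero, add_zero]
  · simp only [x, add_mul, smul_mul_assoc, hPQ, hPP.one_sub.eq, smul_zero, zero_add]

lemma norm_smul_one_add_smul [Nontrivial A] [StarModule ℂ A]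
    (hfs : ∀ x, ‖σ (star x) * x‖ = ‖x‖ ^ 2) {e : A} (he : σ e = -e) (hee : e * e = 1)
    (hstar_e : star e = -e) (m n : ℂ) : ‖m • 1 + n • e‖ = max ‖m + n‖ ‖m - n‖ := by
  have he0 : e ≠ 0 := by rintro rfl; simp at hee
  have hσ_star_one_add : σ (star (1 + e)) = 1 + e := by
    rw [star_add, star_one, hstar_e, map_add, map_one, map_neg, he, neg_neg]
  have hσ_star_one_sub : σ (star (1 - e)) = 1 - e := by
    rw [star_sub, star_one, hstar_e, map_sub, map_one, map_neg, he, neg_neg]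
  have h1e : (1 : A) + e ≠ 0 := fun h => ne_algebraMap_of_map_eq_neg he he0 (-1) (by
    rw [map_neg, map_one]; exact eq_neg_of_add_eq_zero_right h)
  have h1e' : (1 : A) - e ≠ 0 := fun h => ne_algebraMap_of_map_eq_neg he he0 1 (by
    rw [map_one]; exact (sub_eq_zero.1 h).symm)
  have hdecomp : m • (1 : A) + n • e
      = (m + n) • ((2⁻¹ : ℂ) • (1 + e)) + (m - n) • ((2⁻¹ : ℂ) • (1 - e)) := by module
  rw [hdecomp]
  refine norm_smul_add_smul_eq_max hfs (by module) ?_ ?_ ?_ (smul_ne_zero (by norm_num) h1e)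
    (smul_ne_zero (by norm_num) h1e') _ _
  · rw [smul_mul_smul_comm, add_mul, one_mul, mul_sub, mul_one, hee, sub_add_sub_cancel, sub_self,
      smul_zero]
  · rw [star_smul, map_smul, hσ_star_one_add, star_inv₀, star_ofNat]
  · rw [star_smul, map_smul, hσ_star_one_sub, star_inv₀, star_ofNat]

lemma norm_kreinMap [Nontrivial A] [StarModule ℂ A] (hfs : ∀ x, ‖σ (star x) * x‖ = ‖x‖ ^ 2)
    {e : A} (he : σ e = -e) (hee : e * e = 1) (hstar_e : star e = -e)
    {M : Matrix (Fin 2) (Fin 2) ℂ} (hM : Kmem M) : ‖kreinMap e M‖ = ‖M‖ := by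
  conv_rhs => rw [hM.eq_Tmat]
  rw [norm_Tmat]
  exact norm_smul_one_add_smul hfs he hee hstar_e _ _

end Normed

theorem krein_rank_one_iso_K_general {A : Type*} [NormedRing A] [NormedAlgebra ℂ A]
    [StarRing A] [StarModule ℂ A]
(α : A → A)
    (hadd : ∀ x y : A, α (x + y) = α x + α y)
    (hsmul : ∀ (c : ℂ) (x : A), α (c • x) = c • α x)
    (hmul : ∀ x y : A, α (x * y) = α x * α y)
    (hstar : ∀ x : A, α (star x) = star (α x))
    (hinvol : ∀ x : A, α (α x) = x)
    (hfs : ∀ x : A, ‖α (star x) * x‖ = ‖x‖ ^ 2)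
    (hplus : ∃ p : A, α p = p ∧ p ≠ 0 ∧ ∀ x : A, α x = x → ∃ c : ℂ, x = c • p)
    (hminus : ∃ q : A, α q = -q ∧ q ≠ 0 ∧ ∀ x : A, α x = -x → ∃ c : ℂ, x = c • q) :
    (∀ x : A, α x = x → ∃ c : ℂ, x = c • (1 : A)) ∧
    ∃ e : A, α e = -e ∧ ‖e‖ = 1 ∧ e * e = 1 ∧ star e = -e ∧
      -- the map F : T_{m,n} = M ↦ M 0 0 • 1 + M 0 1 • e is a homomorphism of algebras:
      (∀ M N, Kmem M → Kmem N →
        (M * N) 0 0 • (1 : A) + (M * N) 0 1 • e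
          = (M 0 0 • (1 : A) + M 0 1 • e) * (N 0 0 • (1 : A) + N 0 1 • e)) ∧
      (∀ M N : Matrix (Fin 2) (Fin 2) ℂ,
        (M + N) 0 0 • (1 : A) + (M + N) 0 1 • e
          = (M 0 0 • (1 : A) + M 0 1 • e) + (N 0 0 • (1 : A) + N 0 1 • e)) ∧
      (∀ (c : ℂ) (M : Matrix (Fin 2) (Fin 2) ℂ),
        (c • M) 0 0 • (1 : A) + (c • M) 0 1 • e = c • (M 0 0 • (1 : A) + M 0 1 • e)) ∧
      ((1 : Matrix (Fin 2) (Fin 2) ℂ) 0 0 • (1 : A)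
        + (1 : Matrix (Fin 2) (Fin 2) ℂ) 0 1 • e = 1) ∧
      -- it preserves the involutions:
      (∀ M, Kmem M →
        Kst M 0 0 • (1 : A) + Kst M 0 1 • e = star (M 0 0 • (1 : A) + M 0 1 • e)) ∧
      -- it is bijective from 𝕂 onto A:
      (∀ M N, Kmem M → Kmem N →
        M 0 0 • (1 : A) + M 0 1 • e = N 0 0 • (1 : A) + N 0 1 • e → M = N) ∧
      (∀ y : A, ∃ M, Kmem M ∧ M 0 0 • (1 : A) + M 0 1 • e = y) ∧
      -- it is isometric:
      (∀ M, Kmem M → ‖M 0 0 • (1 : A) + M 0 1 • e‖ = ‖M‖) := by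
  have hα1 : α 1 = 1 := by simpa [hinvol] using (hmul 1 (α 1)).symm
  let σ : A →ₐ[ℂ] A := AlgHom.ofLinearMap ⟨⟨α, hadd⟩, hsmul⟩ hα1 hmul
  obtain ⟨p, -, -, hp_span⟩ := hplus
  obtain ⟨q, hq, hq0, hq_span⟩ := hminus
  have : Nontrivial A := nontrivial_of_ne q 0 hq0
  have heven (x : A) (hx : α x = x) : ∃ c : ℂ, x = c • (1 : A) :=
    exists_eq_smul_of_exists_eq_smul (hp_span 1 hα1) one_ne_zero (hp_span x hx)
  obtain ⟨e, he, hee, hodd⟩ :=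
    exists_mul_self_eq_one_of_map_eq_neg (σ := σ) hstar hfs heven hq hq0 hq_span
  have hstar_e : star e = -e := star_eq_neg_of_map_eq_neg (σ := σ) hstar hfs he hee hodd
  have hiso (M) (hM : Kmem M) : ‖kreinMap e M‖ = ‖M‖ :=
    norm_kreinMap (σ := σ) hfs he hee hstar_e hM
  refine ⟨heven, e, he, ?_, hee, hstar_e, fun M N _ hN => kreinMap_mul hee M hN,
    map_add (kreinMap e), map_smul (kreinMap e), kreinMap_one e, fun M _ => kreinMap_Kst hstar_e M,
    fun M N hM hN => kreinMap_injOn hiso hM hN, exists_kmem_kreinMap_eq (σ := σ) hinvol heven hodd,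
    hiso⟩
  simpa using norm_smul_one_add_smul (σ := σ) hfs he hee hstar_e 0 1

/-- Every rank-one unital Kreĭn C*-algebra is isomorphic to `𝕂`:
`A₊ = ℂ·1` and there is `e ∈ A₋` with `‖e‖ = 1`, `e * e = 1`, `star e = -e` such that
`T_{m,n} ↦ m • 1 + n • e` is an isometric *-isomorphism from `𝕂` onto `A`. -/
theorem krein_rank_one_iso_K {A : Type*} [NormedRing A] [NormedAlgebra ℂ A]
    [StarRing A] [StarModule ℂ A] [CompleteSpace A]
(α : A → A)
    (hadd : ∀ x y : A, α (x + y) = α x + α y)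
    (hsmul : ∀ (c : ℂ) (x : A), α (c • x) = c • α x)
    (hmul : ∀ x y : A, α (x * y) = α x * α y)
    (hstar : ∀ x : A, α (star x) = star (α x))
    (hinvol : ∀ x : A, α (α x) = x)
    (hfs : ∀ x : A, ‖α (star x) * x‖ = ‖x‖ ^ 2)
    (hplus : ∃ p : A, α p = p ∧ p ≠ 0 ∧ ∀ x : A, α x = x → ∃ c : ℂ, x = c • p)
    (hminus : ∃ q : A, α q = -q ∧ q ≠ 0 ∧ ∀ x : A, α x = -x → ∃ c : ℂ, x = c • q) :
    (∀ x : A, α x = x → ∃ c : ℂ, x = c • (1 : A)) ∧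
    ∃ e : A, α e = -e ∧ ‖e‖ = 1 ∧ e * e = 1 ∧ star e = -e ∧
      -- the map F : T_{m,n} = M ↦ M 0 0 • 1 + M 0 1 • e is a homomorphism of algebras:
      (∀ M N, Kmem M → Kmem N →
        (M * N) 0 0 • (1 : A) + (M * N) 0 1 • e
          = (M 0 0 • (1 : A) + M 0 1 • e) * (N 0 0 • (1 : A) + N 0 1 • e)) ∧
      (∀ M N : Matrix (Fin 2) (Fin 2) ℂ,
        (M + N) 0 0 • (1 : A) + (M + N) 0 1 • e
          = (M 0 0 • (1 : A) + M 0 1 • e) + (N 0 0 • (1 : A) + N 0 1 • e)) ∧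
      (∀ (c : ℂ) (M : Matrix (Fin 2) (Fin 2) ℂ),
        (c • M) 0 0 • (1 : A) + (c • M) 0 1 • e = c • (M 0 0 • (1 : A) + M 0 1 • e)) ∧
      ((1 : Matrix (Fin 2) (Fin 2) ℂ) 0 0 • (1 : A)
        + (1 : Matrix (Fin 2) (Fin 2) ℂ) 0 1 • e = 1) ∧
      -- it preserves the involutions:
      (∀ M, Kmem M →
        Kst M 0 0 • (1 : A) + Kst M 0 1 • e = star (M 0 0 • (1 : A) + M 0 1 • e)) ∧
      -- it is bijective from 𝕂 onto A:
      (∀ M N, Kmem M → Kmem N →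
        M 0 0 • (1 : A) + M 0 1 • e = N 0 0 • (1 : A) + N 0 1 • e → M = N) ∧
      (∀ y : A, ∃ M, Kmem M ∧ M 0 0 • (1 : A) + M 0 1 • e = y) ∧
      -- it is isometric:
      (∀ M, Kmem M → ‖M 0 0 • (1 : A) + M 0 1 • e‖ = ‖M‖) :=
  krein_rank_one_iso_K_general α hadd hsmul hmul hstar hinvol hfs hplus hminus
end
end

section
/- Let (A, α) be a unital imprimitive Kreĭn C*-algebra with fundamental symmetry α, and let w₁, w₂ be characters on (A, α) such that w₁(a) = w₂(a) for all a ∈ A₊. Then either w₂ = w₁ or w₂ = γ ∘ w₁. -/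
noncomputable section

/-- A character on a Kreĭn C*-algebra `(A, α)`: a unital ℂ-linear multiplicative map
`w : A → 𝕂` with `w (star x) = (w x)*` and `w ∘ α = γ ∘ w`. -/
def IsKChar {A : Type*} [NormedRing A] [NormedAlgebra ℂ A] [StarRing A]
    (α : A → A) (w : A → Matrix (Fin 2) (Fin 2) ℂ) : Prop :=
  (∀ x, Kmem (w x)) ∧
  (∀ x y, w (x + y) = w x + w y) ∧
  (∀ (c : ℂ) (x : A), w (c • x) = c • w x) ∧
  (∀ x y, w (x * y) = w x * w y) ∧
  w 1 = 1 ∧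
  (∀ x, w (star x) = Kst (w x)) ∧
  (∀ x, w (α x) = Kgamma (w x))

/-- `(A, α)` is imprimitive (full): the norm-closure of the linear span of the products of
odd elements is the whole even part. -/
def Imprimitive {A : Type*} [NormedRing A] [NormedAlgebra ℂ A]
    (α : A → A) : Prop :=
  closure ((Submodule.span ℂ {z : A | ∃ x y, α x = -x ∧ α y = -y ∧ z = x * y} :
      Submodule ℂ A) : Set A)
    = {x : A | α x = x}

/-! A character sends an odd element `m` to `b(m) • !![0, 1; 1, 0]`. Products of two odd elements
are even, so `b₁(m) b₁(m') = b₂(m) b₂(m')` for all odd `m, m'`, which forces `b₂ = b₁` or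
`b₂ = -b₁` on the odd part: there `w₂` agrees with `w₁` or with `γ ∘ w₁`. Both of these agree with
`w₂` on the even part, and every element is the sum of an even and an odd one. -/

theorem Kmem.eq_smul_of_Kgamma_eq_neg {M : Matrix (Fin 2) (Fin 2) ℂ} (hM : Kmem M)
    (hodd : Kgamma M = -M) : M = M 0 1 • !![0, 1; 1, 0] := by
  have h00 : M 0 0 = 0 := self_eq_neg.mp (by simpa [Kgamma] using congrFun (congrFun hodd 0) 0)
  have h11 : M 1 1 = 0 := self_eq_neg.mp (by simpa [Kgamma] using congrFun (congrFun hodd 1) 1)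
  ext i j
  fin_cases i <;> fin_cases j <;> simp [h00, h11, hM.2]

theorem Kgamma_add (M N : Matrix (Fin 2) (Fin 2) ℂ) :
    Kgamma (M + N) = Kgamma M + Kgamma N := by
  ext i j
  simp only [Kgamma, Matrix.of_apply, Matrix.add_apply]
  split_ifs <;> ring

theorem eq_or_eq_neg_of_forall_mul_eq_mul {ι R : Type*} [CommRing R] [IsDomain R]
    {f g : ι → R} (h : ∀ i j, f i * f j = g i * g j) : g = f ∨ g = -f := by
  by_cases hf : ∀ i, f i = 0
  · left
    funext i
    have hgi : g i * g i = 0 := by rw [← h, hf i, zero_mul]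
    rw [hf i, mul_self_eq_zero.mp hgi]
  push Not at hf
  obtain ⟨j, hj⟩ := hf
  rcases mul_self_eq_mul_self_iff.mp (h j j).symm with hgj | hgj
  · left
    funext i
    exact mul_right_cancel₀ hj (by rw [h, hgj])
  · right
    funext i
    refine mul_right_cancel₀ hj ?_
    rw [Pi.neg_apply, neg_mul, h, hgj]
    ring

theorem exists_eq_even_add_odd {K E : Type*} [DivisionRing K] [CharZero K]
    [AddCommGroup E] [Module K E] {α : E → E}
    (hadd : ∀ x y, α (x + y) = α x + α y) (hsmul : ∀ (c : K) x, α (c • x) = c • α x)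
    (hinvol : ∀ x, α (α x) = x) (x : E) :
    ∃ p m, α p = p ∧ α m = -m ∧ x = p + m := by
  refine ⟨(2 : K)⁻¹ • (x + α x), (2 : K)⁻¹ • (x - α x), ?_, ?_, ?_⟩
  · rw [hsmul, hadd, hinvol, add_comm]
  · rw [hsmul, show α (x - α x) = α x - α (α x) from (AddMonoidHom.mk' α hadd).map_sub x (α x),
      hinvol, ← smul_neg, neg_sub]
  · rw [← smul_add, add_add_sub_cancel, ← two_smul K x, smul_smul, inv_mul_cancel₀ two_ne_zero,
      one_smul]

theorem apply_eq_of_eq_on_even_of_eq_on_odd {K E F : Type*} [DivisionRing K] [CharZero K]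
    [AddCommGroup E] [Module K E] [Add F] {α : E → E}
    (hadd : ∀ x y, α (x + y) = α x + α y) (hsmul : ∀ (c : K) x, α (c • x) = c • α x)
    (hinvol : ∀ x, α (α x) = x) {f g : E → F}
    (hf : ∀ x y, f (x + y) = f x + f y) (hg : ∀ x y, g (x + y) = g x + g y)
    (heven : ∀ p, α p = p → f p = g p) (hodd : ∀ m, α m = -m → f m = g m) (x : E) :
    f x = g x := by
  obtain ⟨p, m, hp, hm, rfl⟩ := exists_eq_even_add_odd hadd hsmul hinvol x
  rw [hf, hg, heven p hp, hodd m hm]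

namespace IsKChar

variable {A : Type*} [NormedRing A] [NormedAlgebra ℂ A] [StarRing A] {α : A → A}
  {w : A → Matrix (Fin 2) (Fin 2) ℂ}

theorem map_add (hw : IsKChar α w) (x y : A) : w (x + y) = w x + w y := hw.2.1 x y

theorem map_mul (hw : IsKChar α w) (x y : A) : w (x * y) = w x * w y := hw.2.2.2.1 x y

theorem Kgamma_map_even (hw : IsKChar α w) {p : A} (hp : α p = p) : Kgamma (w p) = w p := by
  rw [← hw.2.2.2.2.2.2, hp]

theorem Kgamma_map_odd (hw : IsKChar α w) {m : A} (hm : α m = -m) : Kgamma (w m) = -w m := by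
  rw [← hw.2.2.2.2.2.2, hm]
  exact (AddMonoidHom.mk' w hw.map_add).map_neg m

theorem map_odd (hw : IsKChar α w) {m : A} (hm : α m = -m) :
    w m = w m 0 1 • !![0, 1; 1, 0] :=
  (hw.1 m).eq_smul_of_Kgamma_eq_neg (hw.Kgamma_map_odd hm)

theorem entry_mul_entry_eq {w' : A → Matrix (Fin 2) (Fin 2) ℂ} (hw : IsKChar α w)
    (hw' : IsKChar α w') (hmul : ∀ x y, α (x * y) = α x * α y)
    (heven : ∀ a, α a = a → w a = w' a) {x y : A} (hx : α x = -x) (hy : α y = -y) :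
    w x 0 1 * w y 0 1 = w' x 0 1 * w' y 0 1 := by
  have hxy : w x * w y = w' x * w' y := by
    rw [← hw.map_mul, ← hw'.map_mul, heven (x * y) (by rw [hmul, hx, hy, neg_mul_neg])]
  rw [hw.map_odd hx, hw.map_odd hy, hw'.map_odd hx, hw'.map_odd hy] at hxy
  simpa using congrFun (congrFun hxy 0) 0

end IsKChar

theorem krein_characters_agree_up_to_gamma_general {A : Type*} [NormedRing A] [NormedAlgebra ℂ A]
    [StarRing A]
(α : A → A)
    (hadd : ∀ x y : A, α (x + y) = α x + α y)
    (hsmul : ∀ (c : ℂ) (x : A), α (c • x) = c • α x)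
    (hmul : ∀ x y : A, α (x * y) = α x * α y)
    (hinvol : ∀ x : A, α (α x) = x)
    (w₁ w₂ : A → Matrix (Fin 2) (Fin 2) ℂ)
    (hw₁ : IsKChar α w₁) (hw₂ : IsKChar α w₂)
    (heven : ∀ a : A, α a = a → w₁ a = w₂ a) :
    (∀ x : A, w₂ x = w₁ x) ∨ (∀ x : A, w₂ x = Kgamma (w₁ x)) := by
  rcases eq_or_eq_neg_of_forall_mul_eq_mul (f := fun m : {m : A // α m = -m} ↦ w₁ m 0 1)
      (g := fun m ↦ w₂ m 0 1) (fun x y ↦ hw₁.entry_mul_entry_eq hw₂ hmul heven x.2 y.2)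
    with h | h
  · left
    refine apply_eq_of_eq_on_even_of_eq_on_odd hadd hsmul hinvol hw₂.map_add hw₁.map_add
      (fun p hp ↦ (heven p hp).symm) fun m hm ↦ ?_
    have hm01 : w₂ m 0 1 = w₁ m 0 1 := congrFun h ⟨m, hm⟩
    rw [hw₂.map_odd hm, hm01, ← hw₁.map_odd hm]
  · right
    refine apply_eq_of_eq_on_even_of_eq_on_odd hadd hsmul hinvol hw₂.map_add
      (fun x y ↦ by rw [hw₁.map_add, Kgamma_add]) (fun p hp ↦ by rw [hw₁.Kgamma_map_even hp, heven p hp])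
      fun m hm ↦ ?_
    have hm01 : w₂ m 0 1 = -w₁ m 0 1 := congrFun h ⟨m, hm⟩
    rw [hw₂.map_odd hm, hm01, neg_smul, ← hw₁.map_odd hm, hw₁.Kgamma_map_odd hm]

/-- If two characters of a unital imprimitive Kreĭn C*-algebra agree on the
even part, then `w₂ = w₁` or `w₂ = γ ∘ w₁`. -/
theorem krein_characters_agree_up_to_gamma {A : Type*} [NormedRing A] [NormedAlgebra ℂ A]
    [StarRing A] [StarModule ℂ A] [CompleteSpace A]
(α : A → A)
    (hadd : ∀ x y : A, α (x + y) = α x + α y)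
    (hsmul : ∀ (c : ℂ) (x : A), α (c • x) = c • α x)
    (hmul : ∀ x y : A, α (x * y) = α x * α y)
    (hstar : ∀ x : A, α (star x) = star (α x))
    (hinvol : ∀ x : A, α (α x) = x)
    (hfs : ∀ x : A, ‖α (star x) * x‖ = ‖x‖ ^ 2)
    (himp : Imprimitive α)
    (w₁ w₂ : A → Matrix (Fin 2) (Fin 2) ℂ)
    (hw₁ : IsKChar α w₁) (hw₂ : IsKChar α w₂)
    (heven : ∀ a : A, α a = a → w₁ a = w₂ a) :
    (∀ x : A, w₂ x = w₁ x) ∨ (∀ x : A, w₂ x = Kgamma (w₁ x)) :=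
  krein_characters_agree_up_to_gamma_general α hadd hsmul hmul hinvol w₁ w₂ hw₁ hw₂ heven
end
end
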